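/- Abstract three-stage stability lemma: let x₀, x₁, x₂, x₃ be vectors in an inner product space with associated nonnegative quantities g_j = ‖G x_j‖² for a linear map G, satisfying the three energy identities of the IMEX-RK3 scheme (obtained by testing each stage difference with 2x_j). If the coefficients satisfy 2a₂₂ ≥ |a₃₂−a₂₂| + |a₄₂−a₃₂|, 2a₃₃ ≥ |a₃₂−a₂₂| + |a₄₃−a₃₃|, and 2a₄₄ ≥ |a₄₂−a₃₂| + |a₄₃−a₃₃|, then ‖x₃‖ ≤ ‖x₀‖. -/
import Mathlib


open scoped RealInnerProductSpace

/-- Abstract three-stage stability lemma for the IMEX-RK3 scheme: under the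
coefficient conditions, the stage energy identities imply `‖x₃‖ ≤ ‖x₀‖`. -/
theorem imex_rk3_abstract_stability
    {H : Type*} [NormedAddCommGroup H] [InnerProductSpace ℝ H]
    (G : H →ₗ[ℝ] H) (x₀ x₁ x₂ x₃ : H)
    (a₂₂ a₃₂ a₃₃ a₄₂ a₄₃ a₄₄ β k : ℝ) (hβ : 0 < β) (hk : 0 < k)
    (hc1 : |a₃₂ - a₂₂| + |a₄₂ - a₃₂| ≤ 2 * a₂₂)
    (hc2 : |a₃₂ - a₂₂| + |a₄₃ - a₃₃| ≤ 2 * a₃₃)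
    (hc3 : |a₄₂ - a₃₂| + |a₄₃ - a₃₃| ≤ 2 * a₄₄)
    (h1 : ‖x₁‖ ^ 2 - ‖x₀‖ ^ 2 + ‖x₁ - x₀‖ ^ 2 + 2 * a₂₂ * β * k * ‖G x₁‖ ^ 2 = 0)
    (h2 : ‖x₂‖ ^ 2 - ‖x₁‖ ^ 2 + ‖x₂ - x₁‖ ^ 2 + 2 * a₃₃ * β * k * ‖G x₂‖ ^ 2
        = 2 * (a₂₂ - a₃₂) * β * k * ⟪G x₁, G x₂⟫)
    (h3 : ‖x₃‖ ^ 2 - ‖x₂‖ ^ 2 + ‖x₃ - x₂‖ ^ 2 + 2 * a₄₄ * β * k * ‖G x₃‖ ^ 2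
        = 2 * (a₃₂ - a₄₂) * β * k * ⟪G x₁, G x₃⟫
          + 2 * (a₃₃ - a₄₃) * β * k * ⟪G x₂, G x₃⟫) :
    ‖x₃‖ ≤ ‖x₀‖ := by

  set n1 := ‖G x₁‖ with hn1
  set n2 := ‖G x₂‖ with hn2
  set n3 := ‖G x₃‖ with hn3
  have b12 : (a₂₂ - a₃₂) * ⟪G x₁, G x₂⟫ ≤ |a₃₂ - a₂₂| * (n1 * n2) := by
    calc (a₂₂ - a₃₂) * ⟪G x₁, G x₂⟫ ≤ |(a₂₂ - a₃₂) * ⟪G x₁, G x₂⟫| := le_abs_self _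
    _ = |a₃₂ - a₂₂| * |⟪G x₁, G x₂⟫| := by rw [abs_mul, abs_sub_comm]
    _ ≤ |a₃₂ - a₂₂| * (n1 * n2) :=
        mul_le_mul_of_nonneg_left (abs_real_inner_le_norm _ _) (abs_nonneg _)
  have b13 : (a₃₂ - a₄₂) * ⟪G x₁, G x₃⟫ ≤ |a₄₂ - a₃₂| * (n1 * n3) := by
    calc (a₃₂ - a₄₂) * ⟪G x₁, G x₃⟫ ≤ |(a₃₂ - a₄₂) * ⟪G x₁, G x₃⟫| := le_abs_self _
    _ = |a₄₂ - a₃₂| * |⟪G x₁, G x₃⟫| := by rw [abs_mul, abs_sub_comm]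
    _ ≤ |a₄₂ - a₃₂| * (n1 * n3) :=
        mul_le_mul_of_nonneg_left (abs_real_inner_le_norm _ _) (abs_nonneg _)
  have b23 : (a₃₃ - a₄₃) * ⟪G x₂, G x₃⟫ ≤ |a₄₃ - a₃₃| * (n2 * n3) := by
    calc (a₃₃ - a₄₃) * ⟪G x₂, G x₃⟫ ≤ |(a₃₃ - a₄₃) * ⟪G x₂, G x₃⟫| := le_abs_self _
    _ = |a₄₃ - a₃₃| * |⟪G x₂, G x₃⟫| := by rw [abs_mul, abs_sub_comm]
    _ ≤ |a₄₃ - a₃₃| * (n2 * n3) :=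
        mul_le_mul_of_nonneg_left (abs_real_inner_le_norm _ _) (abs_nonneg _)
  have hbk : 0 < β * k := mul_pos hβ hk
  have key : ‖x₃‖ ^ 2 ≤ ‖x₀‖ ^ 2 := by
    nlinarith [sq_nonneg (n1 - n2), sq_nonneg (n1 - n3), sq_nonneg (n2 - n3),
      sq_nonneg ‖x₁ - x₀‖, sq_nonneg ‖x₂ - x₁‖, sq_nonneg ‖x₃ - x₂‖,
      mul_le_mul_of_nonneg_left b12 hbk.le, mul_le_mul_of_nonneg_left b13 hbk.le,
      mul_le_mul_of_nonneg_left b23 hbk.le,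
      mul_le_mul_of_nonneg_right (mul_le_mul_of_nonneg_left hc1 hbk.le) (sq_nonneg n1),
      mul_le_mul_of_nonneg_right (mul_le_mul_of_nonneg_left hc2 hbk.le) (sq_nonneg n2),
      mul_le_mul_of_nonneg_right (mul_le_mul_of_nonneg_left hc3 hbk.le) (sq_nonneg n3),
      mul_nonneg (mul_nonneg hbk.le (abs_nonneg (a₃₂ - a₂₂))) (sq_nonneg (n1 - n2)),
      mul_nonneg (mul_nonneg hbk.le (abs_nonneg (a₄₂ - a₃₂))) (sq_nonneg (n1 - n3)),
      mul_nonneg (mul_nonneg hbk.le (abs_nonneg (a₄₃ - a₃₃))) (sq_nonneg (n2 - n3))]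
  exact le_of_pow_le_pow_left₀ two_ne_zero (norm_nonneg _) key
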